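/- arXiv:2205.07442 — 2 statements merged into one kernel-verified Lean document; each statement's English description precedes it below -/
import Mathlib

section
/- Let A and B be groups, σ the shift action of B on A^B, ρ : B → A^B a map with ρ_e = e such that v_{b,c} := ρ_b σ_b(ρ_c) ρ_{bc}⁻¹ ∈ A^{(B)} for all b,c ∈ B, and α_b := Ad(ρ_b) ∘ σ_b ∈ Aut(A^{(B)}). Then the cocycle semidirect product G = A^{(B)} ⋊_{α,v} B is a wreath-like product of A and B; that is, there is a short exact sequence {e} → ⊕_{b∈B} A_b → G → B → {e} where A_b ≅ A are the coordinate subgroups of A^{(B)}, and g A_b g⁻¹ = A_{ε(g)b} for every b ∈ B and g ∈ G, where ε : G → B is the quotient map. -/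
/-- The shift automorphism `σ_b` of the full direct product `A^B`, `(σ_b x)_c = x_{b⁻¹ c}`. -/
def shiftAut {A : Type*} (B : Type*) [Group A] [Group B] (b : B) : MulAut (B → A) where
  toFun x := fun c => x (b⁻¹ * c)
  invFun x := fun c => x (b * c)
  left_inv x := by funext c; simp
  right_inv x := by funext c; simp
  map_mul' x y := rfl

/-- The restricted direct product `A^{(B)} = ⊕_{b ∈ B} A` of finitely supported functions,
as a subgroup of the full direct product `A^B`. -/
def Restricted (A B : Type*) [Group A] : Subgroup (B → A) where
  carrier := {f | (Function.mulSupport f).Finite}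
  one_mem' := by simp [Function.mulSupport]
  mul_mem' := fun hf hg => Set.Finite.subset (hf.union hg) (Function.mulSupport_mul _ _)
  inv_mem' := fun hf => by simpa [Function.mulSupport_inv] using hf

/-- The automorphism-level map `α_b = Ad(ρ_b) ∘ σ_b` of `A^B`, as a function. -/
def adShift {A B : Type*} [Group A] [Group B] (ρ : B → (B → A)) (b : B) (x : B → A) :
    B → A :=
  ρ b * shiftAut B b x * (ρ b)⁻¹

/-- The 2-cocycle `v_{b,c} = ρ_b σ_b(ρ_c) ρ_{bc}⁻¹`. -/
def vShift {A B : Type*} [Group A] [Group B] (ρ : B → (B → A)) (b c : B) : B → A :=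
  ρ b * shiftAut B b (ρ c) * (ρ (b * c))⁻¹

/-- The multiplication of the cocycle semidirect product `A^{(B)} ⋊_{α,v} B` for
`α_b = Ad(ρ_b) ∘ σ_b` and `v_{b,c} = ρ_b σ_b(ρ_c) ρ_{bc}⁻¹`, written on the ambient set
`A^B × B`. -/
def cocycleMulShift {A B : Type*} [Group A] [Group B] (ρ : B → (B → A))
    (x y : (B → A) × B) : (B → A) × B :=
  (x.1 * adShift ρ x.2 y.1 * vShift ρ x.2 y.2, x.2 * y.2)

/-- The coordinate subgroup `A_c` of `A^{(B)} ⋊_{α,v} B`: elements `(f, e)` with `f`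
supported at `{c}`. -/
def coordSet {A B : Type*} [Group A] [Group B] (c : B) : Set ((B → A) × B) :=
  {p | p.2 = 1 ∧ ∀ d, d ≠ c → p.1 d = 1}



section Aux
variable {A B : Type*} [Group A] [Group B]

lemma shift_apply (b : B) (x : B → A) (d : B) : shiftAut B b x d = x (b⁻¹ * d) := rfl

lemma shift_shift (b c : B) (x : B → A) :
    shiftAut B b (shiftAut B c x) = shiftAut B (b * c) x := by
  funext d; simp [shift_apply, mul_assoc]

lemma shift_one' (x : B → A) : shiftAut B (1 : B) x = x := by
  funext d; simp [shift_apply]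

lemma shift_mem (b : B) {x : B → A} (hx : x ∈ Restricted A B) :
    (shiftAut B b x : B → A) ∈ Restricted A B := by
  have hsub : Function.mulSupport (shiftAut B b x : B → A)
      ⊆ (fun c => b⁻¹ * c) ⁻¹' Function.mulSupport x := fun c hc => hc
  exact Set.Finite.subset
    (Set.Finite.preimage (Set.injOn_of_injective (mul_right_injective b⁻¹)) hx) hsub

omit [Group B] in
lemma conj_mem (u : B → A) {z : B → A} (hz : z ∈ Restricted A B) :
    u * z * u⁻¹ ∈ Restricted A B := by
  have hsub : Function.mulSupport (u * z * u⁻¹) ⊆ Function.mulSupport z := by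
    intro c hc
    simp only [Function.mem_mulSupport] at hc ⊢
    intro h
    apply hc
    simp [Pi.mul_apply, Pi.inv_apply, h]
  exact Set.Finite.subset hz hsub

lemma key_mul (ρ : B → (B → A)) (x y : (B → A) × B) :
    cocycleMulShift ρ x y =
      (x.1 * ρ x.2 * shiftAut B x.2 (y.1 * ρ y.2) * (ρ (x.2 * y.2))⁻¹, x.2 * y.2) := by
  simp only [cocycleMulShift, adShift, vShift, map_mul]
  refine Prod.ext ?_ rfl
  group

end Aux

/-- The cocycle semidirect product `G = A^{(B)} ⋊_{α,v} B` built from `ρ` is a wreath-like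
product of `A` and `B`: its elements with restricted first coordinate are closed under
multiplication and inverses, `ε = snd` is a multiplicative surjection onto `B` whose
kernel is `A^{(B)}`, and conjugation satisfies `g A_c g⁻¹ = A_{ε(g) c}`. -/
theorem cocycle_semidirect_product_of_shift_is_wreath_like {A B : Type*} [Group A] [Group B]
    (ρ : B → (B → A)) (hρe : ρ 1 = 1)
    (hv : ∀ b c, vShift ρ b c ∈ Restricted A B) :
    (∀ x y : (B → A) × B, x.1 ∈ Restricted A B → y.1 ∈ Restricted A B →
        (cocycleMulShift ρ x y).1 ∈ Restricted A B) ∧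
    (∀ x y : (B → A) × B, (cocycleMulShift ρ x y).2 = x.2 * y.2) ∧
    (∀ b : B, ∃ x : (B → A) × B, x.1 ∈ Restricted A B ∧ x.2 = b) ∧
    (∀ x : (B → A) × B, x.1 ∈ Restricted A B →
        ∃ y : (B → A) × B, y.1 ∈ Restricted A B ∧
          cocycleMulShift ρ x y = ((1 : B → A), (1 : B)) ∧
          cocycleMulShift ρ y x = ((1 : B → A), (1 : B))) ∧
    (∀ g g' : (B → A) × B, g.1 ∈ Restricted A B → g'.1 ∈ Restricted A B →
        cocycleMulShift ρ g g' = ((1 : B → A), (1 : B)) →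
        cocycleMulShift ρ g' g = ((1 : B → A), (1 : B)) →
        ∀ c : B,
          (fun a => cocycleMulShift ρ g (cocycleMulShift ρ a g')) '' coordSet c
            = coordSet (g.2 * c)) := by
  refine ⟨?_, fun x y => rfl, fun b => ⟨(1, b), (Restricted A B).one_mem, rfl⟩, ?_, ?_⟩
  · intro x y hx hy
    exact mul_mem (mul_mem hx (conj_mem _ (shift_mem _ hy))) (hv _ _)
  · intro x hx
    obtain ⟨f, b⟩ := x
    refine ⟨(shiftAut B b⁻¹ (f * ρ b)⁻¹ * (ρ b⁻¹)⁻¹, b⁻¹), ?_, ?_, ?_⟩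
    · have hy1 : shiftAut B b⁻¹ (f * ρ b)⁻¹ * (ρ b⁻¹)⁻¹
          = (vShift ρ b⁻¹ b)⁻¹ * (ρ b⁻¹ * shiftAut B b⁻¹ f⁻¹ * (ρ b⁻¹)⁻¹) := by
        simp only [vShift, map_mul, map_inv, inv_mul_cancel, hρe, inv_one, mul_one]
        group
      rw [hy1]
      exact mul_mem (inv_mem (hv _ _)) (conj_mem _ (shift_mem _ (inv_mem hx)))
    · rw [key_mul]
      refine Prod.ext ?_ (mul_inv_cancel b)
      simp only [map_mul, map_inv, shift_shift, mul_inv_cancel, inv_mul_cancel,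
        shift_one', hρe, inv_one, mul_one]
      group
    · rw [key_mul]
      refine Prod.ext ?_ (inv_mul_cancel b)
      simp only [map_mul, map_inv, shift_shift, mul_inv_cancel, inv_mul_cancel,
        shift_one', hρe, inv_one, mul_one]
      group
  · intro g g' hg hg' hgg' hg'g c
    obtain ⟨f, b⟩ := g
    obtain ⟨y, b'⟩ := g'
    have hb' : b * b' = 1 := congrArg Prod.snd hgg'
    have hkey : shiftAut B b (y * ρ b') = (f * ρ b)⁻¹ := by
      have h1 := congrArg Prod.fst hgg'
      rw [key_mul] at h1
      simp only [hb', hρe, inv_one, mul_one] at h1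
      exact eq_inv_of_mul_eq_one_right h1
    have hconj : ∀ z : B → A,
        cocycleMulShift ρ (f, b) (cocycleMulShift ρ (z, 1) (y, b'))
          = ((f * ρ b) * shiftAut B b z * (f * ρ b)⁻¹, 1) := by
      intro z
      rw [key_mul, key_mul]
      refine Prod.ext ?_ (by simp [← mul_assoc, hb'])
      simp only [hρe, one_mul, mul_one, shift_one', inv_mul_cancel_right]
      rw [hb', hρe, map_mul, hkey]
      simp [mul_assoc]
    ext p
    simp only [Set.mem_image, coordSet, Set.mem_setOf_eq]
    constructor
    · rintro ⟨⟨z, bz⟩, ⟨hbz, hz⟩, rfl⟩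
      simp only at hbz
      subst hbz
      rw [hconj z]
      refine ⟨rfl, fun d hd => ?_⟩
      have hz' : z (b⁻¹ * d) = 1 := by
        apply hz
        intro h
        apply hd
        rw [← h, mul_inv_cancel_left]
      simp only [Pi.mul_apply, Pi.inv_apply, shift_apply, hz']
      group
    · rintro ⟨hp2, hp⟩
      refine ⟨(shiftAut B b⁻¹ ((f * ρ b)⁻¹ * p.1 * (f * ρ b)), 1), ⟨rfl, fun d hd => ?_⟩, ?_⟩
      · have hp' : p.1 (b * d) = 1 := by
          apply hp
          intro h
          exact hd (mul_left_cancel h)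
        simp only [shift_apply, inv_inv, Pi.mul_apply, Pi.inv_apply, hp']
        group
      · rw [hconj]
        rw [shift_shift, mul_inv_cancel, shift_one']
        refine Prod.ext ?_ hp2.symm
        show (f * ρ b) * ((f * ρ b)⁻¹ * p.1 * (f * ρ b)) * (f * ρ b)⁻¹ = p.1
        group
end

section
/- Let A₀, A, B be groups, ψ : A → A₀ a group homomorphism, and G ∈ WR(A, B) a wreath-like product written as G = A^{(B)} ⋊_{α,v} B with α_b = Ad(ρ_b) σ_b and v_{b,c} = ρ_b σ_b(ρ_c) ρ_{bc}⁻¹ for a map ρ : B → A^B with ρ_e = e. Let ψ^B : A^B → A₀^B be the induced map (applying ψ coordinatewise) and set τ_b = ψ^B(ρ_b), β_b = Ad(τ_b) σ_b ∈ Aut(A₀^{(B)}), w_{b,c} = ψ^B(v_{b,c}) ∈ A₀^{(B)}. Then (β, w) is a cocycle action of B on A₀^{(B)}, the group G₀ = A₀^{(B)} ⋊_{β,w} B belongs to WR(A₀, B), and the map ψ̃ : G → G₀ given by ψ̃(a, b) = (ψ^B(a), b) is a group homomorphism extending ψ^B : A^{(B)} → A₀^{(B)}. -/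
/-- The coordinatewise application `ψ^B : A^B → A₀^B` of a homomorphism `ψ : A → A₀`. -/
def psiPow {A A₀ : Type*} (B : Type*) [Group A] [Group A₀] (ψ : A →* A₀) (f : B → A) :
    B → A₀ :=
  fun d => ψ (f d)


section Helpers

set_option linter.unusedSectionVars false

variable {A A₀ B : Type*} [Group A] [Group A₀] [Group B]

lemma shiftAut_apply (b : B) (x : B → A) (c : B) : shiftAut B b x c = x (b⁻¹ * c) := rfl

lemma adShift_apply (ρ : B → (B → A)) (b : B) (x : B → A) (d : B) :
    adShift ρ b x d = ρ b d * x (b⁻¹ * d) * (ρ b d)⁻¹ := rfl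

lemma vShift_apply (ρ : B → (B → A)) (b c d : B) :
    vShift ρ b c d = ρ b d * ρ c (b⁻¹ * d) * (ρ (b * c) d)⁻¹ := rfl

lemma adShift_comp (ρ : B → (B → A)) (b c : B) (x : B → A) :
    adShift ρ b (adShift ρ c x)
      = vShift ρ b c * adShift ρ (b * c) x * (vShift ρ b c)⁻¹ := by
  funext d
  simp only [adShift_apply, vShift_apply, Pi.mul_apply, Pi.inv_apply, mul_inv_rev, mul_assoc,
    inv_mul_cancel_left, inv_inv]

lemma vShift_cocycle (ρ : B → (B → A)) (b c d : B) :
    vShift ρ b c * vShift ρ (b * c) d = adShift ρ b (vShift ρ c d) * vShift ρ b (c * d) := by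
  funext e
  simp only [adShift_apply, vShift_apply, Pi.mul_apply, Pi.inv_apply, mul_inv_rev, mul_assoc,
    inv_mul_cancel_left, inv_inv]

lemma vShift_one_right (ρ : B → (B → A)) (hρe : ρ 1 = 1) (b : B) : vShift ρ b 1 = 1 := by
  funext d
  simp [vShift_apply, hρe]

lemma vShift_one_left (ρ : B → (B → A)) (hρe : ρ 1 = 1) (b : B) : vShift ρ 1 b = 1 := by
  funext d
  simp [vShift_apply, hρe]

lemma psiPow_vShift (ψ : A →* A₀) (ρ : B → (B → A)) (b c : B) :
    vShift (fun b' => psiPow B ψ (ρ b')) b c = psiPow B ψ (vShift ρ b c) := by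
  funext d
  simp [vShift_apply, psiPow]

lemma psiPow_restricted (ψ : A →* A₀) (f : B → A) (hf : f ∈ Restricted A B) :
    psiPow B ψ f ∈ Restricted A₀ B := by
  refine Set.Finite.subset hf ?_
  intro d hd
  simp only [Function.mem_mulSupport, psiPow] at hd ⊢
  exact fun h => hd (by simp [h])

lemma adShift_restricted (τ : B → (B → A₀)) (b : B) (f : B → A₀)
    (hf : f ∈ Restricted A₀ B) : adShift τ b f ∈ Restricted A₀ B := by
  refine Set.Finite.subset (((hf : (Function.mulSupport f).Finite).image (fun d => b * d))) ?_
  intro d hd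
  simp only [Function.mem_mulSupport, adShift_apply] at hd
  refine ⟨b⁻¹ * d, ?_, by group⟩
  simp only [Function.mem_mulSupport]
  intro h
  exact hd (by simp [h])

lemma adShift_image (τ : B → (B → A₀)) (b c : B) :
    adShift τ b '' {f : B → A₀ | ∀ d, d ≠ c → f d = 1}
      = {f : B → A₀ | ∀ d, d ≠ b * c → f d = 1} := by
  ext g
  constructor
  · rintro ⟨f, hf, rfl⟩ d hd
    have : b⁻¹ * d ≠ c := fun h => hd (by rw [← h]; group)
    simp [adShift_apply, hf _ this]
  · intro hg
    refine ⟨fun d => (τ b (b * d))⁻¹ * g (b * d) * τ b (b * d), ?_, ?_⟩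
    · intro d hd
      have : b * d ≠ b * c := fun h => hd (by simpa using h)
      simp [hg _ this]
    · funext d
      simp [adShift_apply, mul_assoc]

end Helpers

/-- Given `ψ : A → A₀` and `G = A^{(B)} ⋊_{α,v} B ∈ WR(A,B)` with `α_b = Ad(ρ_b) σ_b`,
`v_{b,c} = ρ_b σ_b(ρ_c) ρ_{bc}⁻¹`, set `τ_b = ψ^B(ρ_b)`, `β_b = Ad(τ_b) σ_b`,
`w = ψ^B ∘ v`. Then `(β,w)` is a cocycle action of `B` on `A₀^{(B)}`, the group
`G₀ = A₀^{(B)} ⋊_{β,w} B` belongs to `WR(A₀,B)` (i.e. `β_b(A_c) = A_{bc}`), and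
`ψ̃(a,b) = (ψ^B(a), b)` is a homomorphism `G → G₀` extending `ψ^B`. -/
theorem pushforward_wreath_like {A A₀ B : Type*} [Group A] [Group A₀] [Group B]
    (ψ : A →* A₀) (ρ : B → (B → A)) (hρe : ρ 1 = 1)
    (hv : ∀ b c, vShift ρ b c ∈ Restricted A B) :
    (∀ b c, vShift (fun b' => psiPow B ψ (ρ b')) b c = psiPow B ψ (vShift ρ b c)) ∧
    (∀ b c, vShift (fun b' => psiPow B ψ (ρ b')) b c ∈ Restricted A₀ B) ∧
    (∀ b, ∀ f ∈ Restricted A₀ B, adShift (fun b' => psiPow B ψ (ρ b')) b f ∈ Restricted A₀ B) ∧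
    (∀ b c (x : B → A₀),
        adShift (fun b' => psiPow B ψ (ρ b')) b (adShift (fun b' => psiPow B ψ (ρ b')) c x)
          = vShift (fun b' => psiPow B ψ (ρ b')) b c
              * adShift (fun b' => psiPow B ψ (ρ b')) (b * c) x
              * (vShift (fun b' => psiPow B ψ (ρ b')) b c)⁻¹) ∧
    (∀ b c d, vShift (fun b' => psiPow B ψ (ρ b')) b c
          * vShift (fun b' => psiPow B ψ (ρ b')) (b * c) d
        = adShift (fun b' => psiPow B ψ (ρ b')) b (vShift (fun b' => psiPow B ψ (ρ b')) c d)
          * vShift (fun b' => psiPow B ψ (ρ b')) b (c * d)) ∧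
    (∀ b, vShift (fun b' => psiPow B ψ (ρ b')) b 1 = 1) ∧
    (∀ b, vShift (fun b' => psiPow B ψ (ρ b')) 1 b = 1) ∧
    (∀ b c : B, adShift (fun b' => psiPow B ψ (ρ b')) b ''
          {f : B → A₀ | ∀ d, d ≠ c → f d = 1}
        = {f : B → A₀ | ∀ d, d ≠ b * c → f d = 1}) ∧
    (∀ x y : (B → A) × B, x.1 ∈ Restricted A B → y.1 ∈ Restricted A B →
        ((psiPow B ψ (cocycleMulShift ρ x y).1, (cocycleMulShift ρ x y).2) : (B → A₀) × B)
          = cocycleMulShift (fun b' => psiPow B ψ (ρ b'))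
              (psiPow B ψ x.1, x.2) (psiPow B ψ y.1, y.2)) := by
  refine ⟨psiPow_vShift ψ ρ, ?_, fun b f hf => adShift_restricted _ b f hf,
    adShift_comp _, vShift_cocycle _, vShift_one_right _ ?_, vShift_one_left _ ?_,
    adShift_image _, ?_⟩
  · intro b c
    rw [psiPow_vShift]
    exact psiPow_restricted ψ _ (hv b c)
  · funext d; simp [psiPow, hρe]
  · funext d; simp [psiPow, hρe]
  · intro x y _ _
    refine Prod.ext ?_ rfl
    funext d
    simp [cocycleMulShift, psiPow, adShift_apply, vShift_apply]
end
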